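/- arXiv:1001.0448 — 2 statements merged into one kernel-verified Lean document; each statement's English description precedes it below -/
import Mathlib

section
/- Let k be a quasi-complete totally ordered rational tropical semifield and let α : M → N be an injective, lightly surjective homomorphism of k-modules such that M is straight and reflexive. Then α has a left-inversion, i.e. a homomorphism β : N → M of k-modules with β ∘ α = id_M. -/
/-! # Tropical semifields and tropical modules -/

/-- A tropical semifield: a commutative semiring with idempotent addition
(`⊕` is `+`, `⊙` is `*`, the zero element `−∞` is `0`, the unity is `1`)
in which every nonzero element has a multiplicative inverse. -/
class TropSemifield (k : Type*) extends CommSemiring k where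
  add_idem : ∀ a : k, a + a = a
  exists_inv : ∀ a : k, a ≠ 0 → ∃ b : k, a * b = 1

/-- A tropical semigroup: commutative idempotent monoid, written additively
(the zero element is `−∞`). -/
class TropSemigroup (M : Type*) extends AddCommMonoid M where
  add_idem : ∀ v : M, v + v = v

/-- A module over a tropical semifield. -/
class TropModule (k : Type*) (M : Type*) [TropSemifield k] [TropSemigroup M] extends
    SMul k M where
  mul_smul : ∀ (a b : k) (v : M), (a * b) • v = a • b • v
  one_smul : ∀ v : M, (1 : k) • v = v
  add_smul : ∀ (a b : k) (v : M), (a + b) • v = a • v + b • v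
  smul_add : ∀ (a : k) (v w : M), a • (v + w) = a • v + a • w
  zero_smul : ∀ v : M, (0 : k) • v = 0
  smul_zero : ∀ a : k, a • (0 : M) = 0

/-- The canonical partial order `v ≤ w ↔ v ⊕ w = w`. -/
def tle {M : Type*} [Add M] (v w : M) : Prop := v + w = w

/-- Strict version of the canonical order. -/
def tlt {M : Type*} [Add M] (v w : M) : Prop := tle v w ∧ v ≠ w

/-- The canonical order of `k` is total. -/
def TotallyOrderedTSF (k : Type*) [TropSemifield k] : Prop :=
  ∀ a b : k, tle a b ∨ tle b a

/-- Every nonempty subset of `k` admits an infimum. -/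
def QuasiCompleteTSF (k : Type*) [TropSemifield k] : Prop :=
  ∀ S : Set k, S.Nonempty →
    ∃ c : k, (∀ x ∈ S, tle c x) ∧ ∀ d : k, (∀ x ∈ S, tle d x) → tle d c

/-- `k` is rational: `m`-th roots exist and `k` has no maximum element. -/
def RationalTSF (k : Type*) [TropSemifield k] : Prop :=
  (∀ (a : k) (m : ℕ), m ≠ 0 → ∃ b : k, b ^ m = a) ∧ ∀ a : k, ∃ b : k, tlt a b

instance (priority := 100) TropSemifield.toTropSemigroup (k : Type*) [TropSemifield k] :
    TropSemigroup k :=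
  { (inferInstance : AddCommMonoid k) with add_idem := TropSemifield.add_idem }

instance TropModule.self (k : Type*) [TropSemifield k] : TropModule k k :=
  { (inferInstance : SMul k k) with
    mul_smul := fun a b v => mul_assoc a b v
    one_smul := fun v => one_mul v
    add_smul := fun a b v => add_mul a b v
    smul_add := fun a v w => mul_add a v w
    zero_smul := fun v => zero_mul v
    smul_zero := fun a => mul_zero a }

instance TropSemigroup.pi {ι : Type*} (M : Type*) [TropSemigroup M] :
    TropSemigroup (ι → M) :=
  { Pi.addCommMonoid with add_idem := fun v => funext fun i => TropSemigroup.add_idem (v i) }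

instance TropModule.pi (k : Type*) {ι : Type*} (M : Type*) [TropSemifield k] [TropSemigroup M]
    [TropModule k M] : TropModule k (ι → M) where
  smul a v := fun i => a • v i
  mul_smul a b v := funext fun i => TropModule.mul_smul a b (v i)
  one_smul v := funext fun i => TropModule.one_smul (v i)
  add_smul a b v := funext fun i => TropModule.add_smul a b (v i)
  smul_add a v w := funext fun i => TropModule.smul_add a (v i) (w i)
  zero_smul v := funext fun i => TropModule.zero_smul (v i)
  smul_zero a := funext fun i => TropModule.smul_zero (a := a)

/-! ## Homomorphisms of tropical modules -/

/-- A homomorphism of `k`-modules. -/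
structure TropHom (k : Type*) (M : Type*) (N : Type*) [TropSemifield k] [TropSemigroup M]
    [TropModule k M] [TropSemigroup N] [TropModule k N] where
  toFun : M → N
  map_zero' : toFun 0 = 0
  map_add' : ∀ v w : M, toFun (v + w) = toFun v + toFun w
  map_smul' : ∀ (a : k) (v : M), toFun (a • v) = a • toFun v

namespace TropHom

variable {k M N : Type*} [TropSemifield k] [TropSemigroup M] [TropModule k M]
  [TropSemigroup N] [TropModule k N]

theorem ext' {f g : TropHom k M N} (h : ∀ v, f.toFun v = g.toFun v) : f = g := by
  cases f; cases g
  simp only [mk.injEq]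
  exact funext h

instance : Zero (TropHom k M N) :=
  ⟨⟨fun _ => 0, rfl, fun _ _ => (add_zero (0 : N)).symm,
    fun a _ => (TropModule.smul_zero (M := N) a).symm⟩⟩

instance : Add (TropHom k M N) :=
  ⟨fun f g =>
    { toFun := fun v => f.toFun v + g.toFun v
      map_zero' := by
        show f.toFun 0 + g.toFun 0 = 0
        rw [f.map_zero', g.map_zero', add_zero]
      map_add' := fun v w => by
        show f.toFun (v + w) + g.toFun (v + w) =
          (f.toFun v + g.toFun v) + (f.toFun w + g.toFun w)
        rw [f.map_add', g.map_add', add_add_add_comm]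
      map_smul' := fun a v => by
        show f.toFun (a • v) + g.toFun (a • v) = a • (f.toFun v + g.toFun v)
        rw [f.map_smul', g.map_smul', TropModule.smul_add] }⟩

instance : SMul k (TropHom k M N) :=
  ⟨fun a f =>
    { toFun := fun v => a • f.toFun v
      map_zero' := by
        show a • f.toFun 0 = 0
        rw [f.map_zero', TropModule.smul_zero]
      map_add' := fun v w => by
        show a • f.toFun (v + w) = a • f.toFun v + a • f.toFun w
        rw [f.map_add', TropModule.smul_add]
      map_smul' := fun b v => by
        show a • f.toFun (b • v) = b • (a • f.toFun v)
        rw [f.map_smul', ← TropModule.mul_smul, ← TropModule.mul_smul, mul_comm a b] }⟩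

instance : TropSemigroup (TropHom k M N) where
  add := (· + ·)
  zero := 0
  add_assoc f g h := ext' fun v => add_assoc (f.toFun v) (g.toFun v) (h.toFun v)
  zero_add f := ext' fun v => zero_add (f.toFun v)
  add_zero f := ext' fun v => add_zero (f.toFun v)
  add_comm f g := ext' fun v => add_comm (f.toFun v) (g.toFun v)
  nsmul := nsmulRec
  add_idem f := ext' fun v => TropSemigroup.add_idem (f.toFun v)

instance : TropModule k (TropHom k M N) where
  smul := (· • ·)
  mul_smul a b f := ext' fun v => TropModule.mul_smul a b (f.toFun v)
  one_smul f := ext' fun v => TropModule.one_smul (f.toFun v)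
  add_smul a b f := ext' fun v => TropModule.add_smul a b (f.toFun v)
  smul_add a f g := ext' fun v => TropModule.smul_add a (f.toFun v) (g.toFun v)
  zero_smul f := ext' fun v => TropModule.zero_smul (f.toFun v)
  smul_zero a := ext' fun v => TropModule.smul_zero (M := N) a

end TropHom

/-- The canonical map `M → (M∨)∨`, `v ↦ (ξ ↦ ⟨v, ξ⟩)`. -/
def iotaFun (k : Type*) (M : Type*) [TropSemifield k] [TropSemigroup M] [TropModule k M] :
    M → TropHom k (TropHom k M k) k :=
  fun v => ⟨fun ξ => ξ.toFun v, rfl, fun ξ η => rfl, fun a ξ => rfl⟩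

/-! ## Order-theoretic notions -/

/-- `z` is the infimum of `v` and `w` w.r.t. the canonical order. -/
def IsTInf {M : Type*} [Add M] (v w z : M) : Prop :=
  tle z v ∧ tle z w ∧ ∀ y : M, tle y v → tle y w → tle y z

/-- A tropical module is straight if it is a finitely distributive ordered lattice. -/
def Straight (M : Type*) [Add M] : Prop :=
  (∀ v w : M, ∃ z : M, IsTInf v w z) ∧
    ∀ v₁ v₂ w z₁ z₂ : M, IsTInf v₁ w z₁ → IsTInf v₂ w z₂ → IsTInf (v₁ + v₂) w (z₁ + z₂)

/-- Infimum of `v` and `w` within the subset `N`. -/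
def IsTInfOn {M : Type*} [Add M] (N : Set M) (v w z : M) : Prop :=
  tle z v ∧ tle z w ∧ ∀ y ∈ N, tle y v → tle y w → tle y z

/-- A submodule (viewed as a subset) is straight. -/
def StraightSet {M : Type*} [Add M] (N : Set M) : Prop :=
  (∀ v ∈ N, ∀ w ∈ N, ∃ z ∈ N, IsTInfOn N v w z) ∧
    ∀ v₁ ∈ N, ∀ v₂ ∈ N, ∀ w ∈ N, ∀ z₁ ∈ N, ∀ z₂ ∈ N,
      IsTInfOn N v₁ w z₁ → IsTInfOn N v₂ w z₂ → IsTInfOn N (v₁ + v₂) w (z₁ + z₂)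

/-! ## Generation, bases, extremal elements -/

/-- `S` generates the `k`-module `M`. -/
def TGenerates (k : Type*) {M : Type*} [TropSemifield k] [TropSemigroup M] [TropModule k M]
    (S : Set M) : Prop :=
  ∀ v : M, ∃ (r : ℕ) (a : Fin r → k) (x : Fin r → M), (∀ i, x i ∈ S) ∧ v = ∑ i, a i • x i

/-- `M` is finitely generated. -/
def TFG (k : Type*) (M : Type*) [TropSemifield k] [TropSemigroup M] [TropModule k M] : Prop :=
  ∃ S : Finset M, TGenerates k (↑S : Set M)

/-- A basis: a generating set no proper subset of which generates. -/
def TBasis (k : Type*) {M : Type*} [TropSemifield k] [TropSemigroup M] [TropModule k M]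
    (S : Set M) : Prop :=
  TGenerates k S ∧ ∀ T : Set M, T ⊂ S → ¬ TGenerates k T

/-- `S` generates the subset `N` (viewed as a submodule of `M`). -/
def TGeneratesOn (k : Type*) {M : Type*} [TropSemifield k] [TropSemigroup M] [TropModule k M]
    (N S : Set M) : Prop :=
  ∀ v ∈ N, ∃ (r : ℕ) (a : Fin r → k) (x : Fin r → M), (∀ i, x i ∈ S) ∧ v = ∑ i, a i • x i

/-- A basis of the submodule `N ⊆ M`. -/
def TBasisOn (k : Type*) {M : Type*} [TropSemifield k] [TropSemigroup M] [TropModule k M]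
    (N S : Set M) : Prop :=
  S ⊆ N ∧ TGeneratesOn k N S ∧ ∀ T : Set M, T ⊂ S → ¬ TGeneratesOn k N T

/-- An extremal element. -/
def TExtremal {M : Type*} [Add M] [Zero M] (e : M) : Prop :=
  e ≠ 0 ∧ ∀ v w : M, v + w = e → v = e ∨ w = e

/-- The ray `k ⊙ e` generated by an element. -/
def tray (k : Type*) {M : Type*} [TropSemifield k] [TropSemigroup M] [TropModule k M]
    (e : M) : Set M :=
  Set.range fun a : k => a • e

/-- The set of extremal rays of `M`. -/
def extRays (k : Type*) (M : Type*) [TropSemifield k] [TropSemigroup M] [TropModule k M] :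
    Set (Set M) :=
  {R : Set M | ∃ e : M, TExtremal e ∧ R = tray k e}

/-- The dimension of a straight reflexive module: the number of extremal rays. -/
noncomputable def tdim (k : Type*) (M : Type*) [TropSemifield k] [TropSemigroup M]
    [TropModule k M] : ℕ :=
  (extRays k M).ncard

/-! ## Further notions on homomorphisms -/

/-- A lightly surjective homomorphism. -/
def LightlySurjective {k M N : Type*} [TropSemifield k] [TropSemigroup M] [TropModule k M]
    [TropSemigroup N] [TropModule k N] (α : TropHom k M N) : Prop :=
  ∀ w : N, ∃ v : M, tle w (α.toFun v)

/-- A lattice-preserving homomorphism. -/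
def LatticePreserving {k M N : Type*} [TropSemifield k] [TropSemigroup M] [TropModule k M]
    [TropSemigroup N] [TropModule k N] (α : TropHom k M N) : Prop :=
  ∀ v w : M, ∀ x : N, tle x (α.toFun v) → tle x (α.toFun w) →
    ∃ y : M, tle y v ∧ tle y w ∧ tle x (α.toFun y)

/-- The inclusion of the subset `N` into the ambient module is lattice-preserving. -/
def LatPresSet {M : Type*} [Add M] (N : Set M) : Prop :=
  ∀ v ∈ N, ∀ w ∈ N, ∀ x : M, tle x v → tle x w → ∃ y ∈ N, tle y v ∧ tle y w ∧ tle x y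

/-- `η` is the dual element of `e`: `⟨e,η⟩ = 0` and
`⟨v,η⟩ ⊙ ⟨e,ξ⟩ ≤ ⟨v,ξ⟩` for all `v`, `ξ`. -/
def IsDualElement {k M : Type*} [TropSemifield k] [TropSemigroup M] [TropModule k M]
    (e : M) (η : TropHom k M k) : Prop :=
  η.toFun e = 1 ∧ ∀ (v : M) (ξ : TropHom k M k), tle (η.toFun v * ξ.toFun e) (ξ.toFun v)

/-! ## Locators -/

/-- A locator of `M`: a lower-saturated subsemigroup of `(M, ⊕)` that generates `M`. -/
structure IsLocator (k : Type*) {M : Type*} [TropSemifield k] [TropSemigroup M] [TropModule k M]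
    (S : Set M) : Prop where
  lower : ∀ v w : M, tle v w → w ∈ S → v ∈ S
  add_mem : ∀ v ∈ S, ∀ w ∈ S, v + w ∈ S
  generates : TGenerates k S

/-- The multiplicative inverse `⊘a` (junk value `−∞` at `−∞`). -/
noncomputable def tinv {k : Type*} [TropSemifield k] (a : k) : k := by
  classical exact if h : a = 0 then 0 else Classical.choose (TropSemifield.exists_inv a h)

/-- Scalar multiplication on locators: `a ⊙̌ S = (⊘a) ⊙ S` for `a ≠ −∞`, `(−∞) ⊙̌ S = M`. -/
noncomputable def locSMul {k M : Type*} [TropSemifield k] [TropSemigroup M] [TropModule k M]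
    (a : k) (S : Set M) : Set M := by
  classical exact if a = 0 then Set.univ else (fun v => tinv a • v) '' S

/-- `U` is the infimum of the locators `S`, `T` in `Loc(M)` (whose canonical
order is reverse inclusion, the sum being intersection). -/
def IsLocInf (k : Type*) {M : Type*} [TropSemifield k] [TropSemigroup M] [TropModule k M]
    (S T U : Set M) : Prop :=
  IsLocator k U ∧ S ⊆ U ∧ T ⊆ U ∧
    ∀ W : Set M, IsLocator k W → S ⊆ W → T ⊆ W → U ⊆ W

/-! ## Submodules -/

/-- A subset of a `k`-module which is a submodule. -/
structure IsTSubmodule (k : Type*) {M : Type*} [TropSemifield k] [TropSemigroup M]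
    [TropModule k M] (N : Set M) : Prop where
  zero_mem : (0 : M) ∈ N
  add_mem : ∀ v ∈ N, ∀ w ∈ N, v + w ∈ N
  smul_mem : ∀ (a : k), ∀ v ∈ N, a • v ∈ N

/-- A bundled submodule of a `k`-module. -/
structure TSub (k : Type*) (M : Type*) [TropSemifield k] [TropSemigroup M] [TropModule k M] where
  carrier : Set M
  zero_mem : (0 : M) ∈ carrier
  add_mem : ∀ v ∈ carrier, ∀ w ∈ carrier, v + w ∈ carrier
  smul_mem : ∀ (a : k), ∀ v ∈ carrier, a • v ∈ carrier

instance TSub.instZero {k M : Type*} [TropSemifield k] [TropSemigroup M] [TropModule k M]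
    (N : TSub k M) : Zero ↥N.carrier :=
  ⟨⟨0, N.zero_mem⟩⟩

instance TSub.instAdd {k M : Type*} [TropSemifield k] [TropSemigroup M] [TropModule k M]
    (N : TSub k M) : Add ↥N.carrier :=
  ⟨fun v w => ⟨v.1 + w.1, N.add_mem v.1 v.2 w.1 w.2⟩⟩

instance TSub.instSMul {k M : Type*} [TropSemifield k] [TropSemigroup M] [TropModule k M]
    (N : TSub k M) : SMul k ↥N.carrier :=
  ⟨fun a v => ⟨a • v.1, N.smul_mem a v.1 v.2⟩⟩

instance TSub.semigroup {k M : Type*} [TropSemifield k] [TropSemigroup M] [TropModule k M]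
    (N : TSub k M) : TropSemigroup ↥N.carrier where
  add := (· + ·)
  zero := 0
  add_assoc a b c := Subtype.ext (add_assoc a.1 b.1 c.1)
  zero_add a := Subtype.ext (zero_add a.1)
  add_zero a := Subtype.ext (add_zero a.1)
  add_comm a b := Subtype.ext (add_comm a.1 b.1)
  nsmul := nsmulRec
  add_idem a := Subtype.ext (TropSemigroup.add_idem a.1)

instance TSub.module {k M : Type*} [TropSemifield k] [TropSemigroup M] [TropModule k M]
    (N : TSub k M) : TropModule k ↥N.carrier where
  smul := (· • ·)
  mul_smul a b v := Subtype.ext (TropModule.mul_smul a b v.1)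
  one_smul v := Subtype.ext (TropModule.one_smul v.1)
  add_smul a b v := Subtype.ext (TropModule.add_smul a b v.1)
  smul_add a v w := Subtype.ext (TropModule.smul_add a v.1 w.1)
  zero_smul v := Subtype.ext (TropModule.zero_smul v.1)
  smul_zero a := Subtype.ext (TropModule.smul_zero (M := M) a)

/-! ## Linear combinations -/

theorem tsmul_sum {k M : Type*} [TropSemifield k] [TropSemigroup M] [TropModule k M]
    (a : k) {ι : Type*} (s : Finset ι) (f : ι → M) :
    a • (∑ i ∈ s, f i) = ∑ i ∈ s, a • f i := by
  classical
  induction s using Finset.induction_on with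
  | empty => simpa using TropModule.smul_zero (M := M) a
  | insert _ _ h ih => rw [Finset.sum_insert h, Finset.sum_insert h, TropModule.smul_add, ih]

/-- The homomorphism `kⁿ → M` sending the `i`-th standard basis element to `e i`. -/
def linComb {k M : Type*} [TropSemifield k] [TropSemigroup M] [TropModule k M] {n : ℕ}
    (e : Fin n → M) : TropHom k (Fin n → k) M where
  toFun v := ∑ i, v i • e i
  map_zero' :=
    (Finset.sum_congr rfl fun i _ => TropModule.zero_smul (e i)).trans Finset.sum_const_zero
  map_add' v w := by
    rw [← Finset.sum_add_distrib]
    exact Finset.sum_congr rfl fun i _ => TropModule.add_smul (v i) (w i) (e i)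
  map_smul' a v := by
    rw [tsmul_sum]
    exact Finset.sum_congr rfl fun i _ => TropModule.mul_smul a (v i) (e i)

/-- The homomorphism `M → kⁿ` induced by an `n`-tuple of elements of `M∨`. -/
def dualTuple {k M : Type*} [TropSemifield k] [TropSemigroup M] [TropModule k M] {n : ℕ}
    (η : Fin n → TropHom k M k) : TropHom k M (Fin n → k) where
  toFun v := fun i => (η i).toFun v
  map_zero' := funext fun i => (η i).map_zero'
  map_add' v w := funext fun i => (η i).map_add' v w
  map_smul' a v := funext fun i => (η i).map_smul' a v

/-!
The left inverse sends `w ∈ N` to `inf {u ∈ M | w ≤ α u}`, which is additive, homogeneous and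
recovers `v` from `α v`.

Infima in `M` come from reflexivity: for a nonempty downward directed `D ⊆ M`, the map
`ξ ↦ inf ξ(D)` is a homomorphism `M∨ → k` (additivity uses that `k` is a chain), hence of the
form `ι m`, and `m = inf D`. Straightness makes `M` a distributive lattice, so any nonempty set
may be replaced by its meet closure, which is directed. The same structure gives additivity of
the left inverse: a linear form `ξ` with values in the chain `k` satisfies
`x ≤ c ⊕ y → ξ x ≤ ξ c ∨ ξ x ≤ ξ y`, which reduces `x ≤ c ⊕ inf U` to the pointwise
hypotheses `x ≤ c ⊕ u`, `u ∈ U`.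
-/

-- `SemilatticeSup.mk'` orders by `v ⊔ w = w`, so `v ≤ w` is `tle v w` definitionally.
abbrev TropSemigroup.toSemilatticeSup (M : Type*) [TropSemigroup M] : SemilatticeSup M :=
  @SemilatticeSup.mk' M ⟨(· + ·)⟩ add_comm add_assoc TropSemigroup.add_idem

attribute [local instance] TropSemigroup.toSemilatticeSup

theorem TropSemigroup.zero_le {M : Type*} [TropSemigroup M] (v : M) : 0 ≤ v :=
  zero_add v

namespace TropModule

variable {k M : Type*} [TropSemifield k] [TropSemigroup M] [TropModule k M]

theorem smul_mono (a : k) : Monotone (a • · : M → M) := fun v w h => by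
  show a • v + a • w = a • w
  rw [← TropModule.smul_add, show v + w = w from h]

theorem mul_tinv {a : k} (ha : a ≠ 0) : a * tinv a = 1 := by
  rw [tinv, dif_neg ha]
  exact Classical.choose_spec (TropSemifield.exists_inv a ha)

theorem smul_tinv_smul {a : k} (ha : a ≠ 0) (v : M) : a • tinv a • v = v := by
  rw [← TropModule.mul_smul, mul_tinv ha, TropModule.one_smul]

theorem tinv_smul_smul {a : k} (ha : a ≠ 0) (v : M) : tinv a • a • v = v := by
  rw [← TropModule.mul_smul, mul_comm, mul_tinv ha, TropModule.one_smul]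

noncomputable def smulOrderIso {a : k} (ha : a ≠ 0) : M ≃o M where
  toFun v := a • v
  invFun v := tinv a • v
  left_inv := tinv_smul_smul ha
  right_inv := smul_tinv_smul ha
  map_rel_iff' {v w} := by
    show a • v ≤ a • w ↔ v ≤ w
    exact ⟨fun h => by simpa only [tinv_smul_smul ha] using smul_mono (tinv a) h,
      fun h => smul_mono a h⟩

theorem isGLB_image_smul {S : Set M} {c : M} (hS : S.Nonempty) (h : IsGLB S c) (a : k) :
    IsGLB ((a • ·) '' S) (a • c) := by
  by_cases ha : a = 0
  · subst ha
    simp only [TropModule.zero_smul, hS.image_const]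
    exact isGLB_singleton
  · exact (smulOrderIso ha).isGLB_image'.2 h

end TropModule

namespace TropHom

variable {k M N : Type*} [TropSemifield k] [TropSemigroup M] [TropModule k M]
  [TropSemigroup N] [TropModule k N]

theorem monotone (f : TropHom k M N) : Monotone f.toFun := fun v w h => by
  show f.toFun v + f.toFun w = f.toFun w
  rw [← f.map_add', show v + w = w from h]

theorem le_of_map_le_map {f : TropHom k M N} (hf : Function.Injective f.toFun) {v w : M}
    (h : f.toFun v ≤ f.toFun w) : v ≤ w :=
  hf ((f.map_add' v w).trans h)

end TropHom

theorem QuasiCompleteTSF.exists_isGLB {k : Type*} [TropSemifield k] (hqc : QuasiCompleteTSF k)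
    {S : Set k} (hS : S.Nonempty) : ∃ c, IsGLB S c :=
  let ⟨c, hlow, hgreat⟩ := hqc S hS
  ⟨c, fun x hx => hlow x hx, fun d hd => hgreat d fun _ hx => hd hx⟩

namespace TotallyOrderedTSF

variable {k : Type*} [TropSemifield k]

theorem le_add_iff (hto : TotallyOrderedTSF k) {x y z : k} : z ≤ x + y ↔ z ≤ x ∨ z ≤ y := by
  refine ⟨fun hz => ?_, fun hz => hz.elim (fun h => le_sup_of_le_left h)
    (fun h => le_sup_of_le_right h)⟩
  rcases hto x y with h | h
  · exact Or.inr ((show x + y = y from h) ▸ hz)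
  · exact Or.inl ((add_comm x y).trans h ▸ hz)

theorem le_add_of_isGLB (hto : TotallyOrderedTSF k) {A B : Set k} {a b z : k}
    (ha : IsGLB A a) (hb : IsGLB B b) (h : ∀ x ∈ A, ∀ y ∈ B, z ≤ x + y) : z ≤ a + b := by
  by_cases hz : z ∈ lowerBounds A
  · exact le_sup_of_le_left (ha.2 hz)
  · obtain ⟨x, hx, hzx⟩ : ∃ x ∈ A, ¬z ≤ x := by simpa [lowerBounds] using hz
    exact le_sup_of_le_right (hb.2 fun y hy => (hto.le_add_iff.1 (h x hx y hy)).resolve_left hzx)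

end TotallyOrderedTSF

section Reflexive

variable {k M : Type*} [TropSemifield k] [TropSemigroup M] [TropModule k M]

theorem le_of_forall_dual_le (hι : Function.Injective (iotaFun k M)) {x y : M}
    (h : ∀ ξ : TropHom k M k, ξ.toFun x ≤ ξ.toFun y) : x ≤ y :=
  hι (TropHom.ext' fun ξ => (ξ.map_add' x y).trans (h ξ))

theorem isGLB_of_forall_dual_isGLB (hι : Function.Injective (iotaFun k M)) {D : Set M} {m : M}
    (h : ∀ ξ : TropHom k M k, IsGLB (ξ.toFun '' D) (ξ.toFun m)) : IsGLB D m :=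
  ⟨fun _ hy => le_of_forall_dual_le hι fun ξ => (h ξ).1 (Set.mem_image_of_mem _ hy),
    fun _ hy => le_of_forall_dual_le hι fun ξ =>
      (h ξ).2 (by rintro _ ⟨d, hd, rfl⟩; exact ξ.monotone (hy hd))⟩

theorem exists_dual_isGLB_of_codirectedOn (hto : TotallyOrderedTSF k) (hqc : QuasiCompleteTSF k)
    (hι : Function.Surjective (iotaFun k M)) {D : Set M} (hne : D.Nonempty)
    (hD : DirectedOn (· ≥ ·) D) :
    ∃ m : M, ∀ ξ : TropHom k M k, IsGLB (ξ.toFun '' D) (ξ.toFun m) := by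
  choose I hI using fun ξ : TropHom k M k => hqc.exists_isGLB (hne.image ξ.toFun)
  have map_add : ∀ ξ ξ' : TropHom k M k, I (ξ + ξ') = I ξ + I ξ' := fun ξ ξ' => by
    refine le_antisymm (hto.le_add_of_isGLB (hI ξ) (hI ξ') ?_) (sup_le ?_ ?_)
    · rintro _ ⟨y, hy, rfl⟩ _ ⟨y', hy', rfl⟩
      obtain ⟨y'', hy'', hyy'', hy'y''⟩ := hD y hy y' hy'
      exact ((hI (ξ + ξ')).1 (Set.mem_image_of_mem _ hy'')).trans
        (sup_le_sup (ξ.monotone hyy'') (ξ'.monotone hy'y''))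
    · exact (hI _).2 fun _ ⟨y, hy, h⟩ =>
        h ▸ ((hI ξ).1 (Set.mem_image_of_mem _ hy)).trans le_sup_left
    · exact (hI _).2 fun _ ⟨y, hy, h⟩ =>
        h ▸ ((hI ξ').1 (Set.mem_image_of_mem _ hy)).trans le_sup_right
  have map_smul : ∀ (a : k) (ξ : TropHom k M k), I (a • ξ) = a • I ξ := fun a ξ =>
    (hI (a • ξ)).unique <| by
      rw [show (a • ξ).toFun '' D = (a • ·) '' (ξ.toFun '' D) from
        (Set.image_image (a • ·) ξ.toFun D).symm]
      exact TropModule.isGLB_image_smul (hne.image _) (hI ξ) a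
  have map_zero : I 0 = 0 := le_antisymm ((hI 0).1 (Set.mem_image_of_mem _ hne.some_mem))
    (TropSemigroup.zero_le _)
  obtain ⟨m, hm⟩ := hι ⟨I, map_zero, map_add, map_smul⟩
  exact ⟨m, fun ξ => congrArg (fun F => F.toFun ξ) hm ▸ hI ξ⟩

end Reflexive

section Straight

variable {k M : Type*} [TropSemifield k] [TropSemigroup M] [TropModule k M]

noncomputable abbrev Straight.distribLattice (h : Straight M) : DistribLattice M :=
  letI : Lattice M :=
    { TropSemigroup.toSemilatticeSup M with
      inf := fun v w => Classical.choose (h.1 v w)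
      inf_le_left := fun v w => (Classical.choose_spec (h.1 v w)).1
      inf_le_right := fun v w => (Classical.choose_spec (h.1 v w)).2.1
      le_inf := fun u v w huv huw => (Classical.choose_spec (h.1 v w)).2.2 u huv huw }
  DistribLattice.ofInfSupLe fun a b c => by
    have := h.2 b c a (b ⊓ a) (c ⊓ a) (Classical.choose_spec (h.1 b a))
      (Classical.choose_spec (h.1 c a))
    rw [inf_comm a b, inf_comm a c]
    exact this.2.2 (a ⊓ (b ⊔ c)) (show a ⊓ (b ⊔ c) ≤ b ⊔ c from inf_le_right)
      (show a ⊓ (b ⊔ c) ≤ a from inf_le_left)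

theorem TropHom.le_or_le_of_le_add (hto : TotallyOrderedTSF k) (hstraight : Straight M)
    (ξ : TropHom k M k) {x c y : M} (h : x ≤ c + y) :
    ξ.toFun x ≤ ξ.toFun c ∨ ξ.toFun x ≤ ξ.toFun y := by
  let _ : DistribLattice M := hstraight.distribLattice
  have hx : x = x ⊓ c ⊔ x ⊓ y := by
    rw [← inf_sup_left, inf_eq_left.2 (show x ≤ c ⊔ y from h)]
  have hξx : ξ.toFun x = ξ.toFun (x ⊓ c) + ξ.toFun (x ⊓ y) := by
    rw [← ξ.map_add']
    exact congrArg ξ.toFun hx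
  exact (hto.le_add_iff.1 hξx.le).imp (fun h => h.trans (ξ.monotone inf_le_right))
    (fun h => h.trans (ξ.monotone inf_le_right))

theorem Straight.exists_isGLB (hstraight : Straight M) (hto : TotallyOrderedTSF k)
    (hqc : QuasiCompleteTSF k) (hι : Function.Bijective (iotaFun k M)) {U : Set M}
    (hU : U.Nonempty) : ∃ m, IsGLB U m := by
  let _ : DistribLattice M := hstraight.distribLattice
  obtain ⟨m, hm⟩ := exists_dual_isGLB_of_codirectedOn hto hqc hι.2 (hU.mono subset_infClosure)
    infClosed_infClosure.codirectedOn
  exact ⟨m, isGLB_infClosure.1 (isGLB_of_forall_dual_isGLB hι.1 hm)⟩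

theorem Straight.le_add_of_forall_le_add (hstraight : Straight M) (hto : TotallyOrderedTSF k)
    (hqc : QuasiCompleteTSF k) (hι : Function.Bijective (iotaFun k M)) {U : Set M} {m x c : M}
    (hU : U.Nonempty) (hm : IsGLB U m) (h : ∀ u ∈ U, x ≤ c + u) : x ≤ c + m := by
  let _ : DistribLattice M := hstraight.distribLattice
  have hD : ∀ y ∈ infClosure U, x ≤ c + y := infClosure_min h fun a ha b hb => by
    show x ≤ c ⊔ a ⊓ b
    rw [sup_inf_left]
    exact le_inf ha hb
  obtain ⟨m', hm'⟩ := exists_dual_isGLB_of_codirectedOn hto hqc hι.2 (hU.mono subset_infClosure)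
    infClosed_infClosure.codirectedOn
  obtain rfl : m' = m := (isGLB_infClosure.1 (isGLB_of_forall_dual_isGLB hι.1 hm')).unique hm
  refine le_of_forall_dual_le hι.1 fun ξ => ?_
  rw [ξ.map_add']
  by_cases hxc : ξ.toFun x ≤ ξ.toFun c
  · exact le_sup_of_le_left hxc
  · refine le_sup_of_le_right ((hm' ξ).2 ?_)
    rintro _ ⟨y, hy, rfl⟩
    exact (ξ.le_or_le_of_le_add hto hstraight (hD y hy)).resolve_left hxc

end Straight

namespace TropHom

variable {k M N : Type*} [TropSemifield k] [TropSemigroup M] [TropModule k M]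
  [TropSemigroup N] [TropModule k N] (α : TropHom k M N)

theorem isGLB_preimage_Ici_zero : IsGLB (α.toFun ⁻¹' Set.Ici 0) 0 :=
  IsLeast.isGLB ⟨TropSemigroup.zero_le _, fun u _ => TropSemigroup.zero_le u⟩

theorem isGLB_preimage_Ici_map (hinj : Function.Injective α.toFun) (v : M) :
    IsGLB (α.toFun ⁻¹' Set.Ici (α.toFun v)) v :=
  IsLeast.isGLB ⟨show α.toFun v ≤ α.toFun v from le_rfl, fun _ hu => le_of_map_le_map hinj hu⟩

theorem isGLB_preimage_Ici_smul {w : N} {m : M} (hm : IsGLB (α.toFun ⁻¹' Set.Ici w) m) (a : k) :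
    IsGLB (α.toFun ⁻¹' Set.Ici (a • w)) (a • m) := by
  by_cases ha : a = 0
  · subst ha
    rw [TropModule.zero_smul, TropModule.zero_smul]
    exact α.isGLB_preimage_Ici_zero
  · have hpre : α.toFun ⁻¹' Set.Ici (a • w) =
        TropModule.smulOrderIso ha '' (α.toFun ⁻¹' Set.Ici w) := by
      rw [OrderIso.image_eq_preimage_symm]
      ext u
      show a • w ≤ α.toFun u ↔ w ≤ α.toFun (tinv a • u)
      rw [α.map_smul']
      exact ((TropModule.smulOrderIso ha).le_symm_apply).symm
    rw [hpre]
    exact (TropModule.smulOrderIso ha).isGLB_image'.2 hm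

theorem isGLB_preimage_Ici_add (hto : TotallyOrderedTSF k) (hqc : QuasiCompleteTSF k)
    (hι : Function.Bijective (iotaFun k M)) (hstraight : Straight M) (hlight : LightlySurjective α)
    {w₁ w₂ : N} {m₁ m₂ : M} (hm₁ : IsGLB (α.toFun ⁻¹' Set.Ici w₁) m₁)
    (hm₂ : IsGLB (α.toFun ⁻¹' Set.Ici w₂) m₂) :
    IsGLB (α.toFun ⁻¹' Set.Ici (w₁ + w₂)) (m₁ + m₂) := by
  refine ⟨fun u (hu : w₁ + w₂ ≤ α.toFun u) => sup_le
    (hm₁.1 (show w₁ ≤ α.toFun u from le_sup_left.trans hu))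
    (hm₂.1 (show w₂ ≤ α.toFun u from le_sup_right.trans hu)),
    fun y hy => ?_⟩
  have hsum : ∀ u₁, w₁ ≤ α.toFun u₁ → ∀ u₂, w₂ ≤ α.toFun u₂ → y ≤ u₁ + u₂ :=
    fun u₁ hu₁ u₂ hu₂ => hy (show w₁ + w₂ ≤ α.toFun (u₁ + u₂) from
      α.map_add' u₁ u₂ ▸ sup_le_sup hu₁ hu₂)
  have hm₂' : ∀ u₁, w₁ ≤ α.toFun u₁ → y ≤ m₂ + u₁ := fun u₁ hu₁ => add_comm u₁ m₂ ▸
    hstraight.le_add_of_forall_le_add hto hqc hι (hlight w₂) hm₂ (hsum u₁ hu₁)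
  exact add_comm m₂ m₁ ▸ hstraight.le_add_of_forall_le_add hto hqc hι (hlight w₁) hm₁ hm₂'

end TropHom

theorem stmt1_general {k M N : Type*} [TropSemifield k] [TropSemigroup M] [TropModule k M]
    [TropSemigroup N] [TropModule k N]
    (hto : TotallyOrderedTSF k) (hqc : QuasiCompleteTSF k)
    (α : TropHom k M N) (hinj : Function.Injective α.toFun)
    (hlight : LightlySurjective α) (hstraight : Straight M)
    (hrefl : Function.Bijective (iotaFun k M)) :
    ∃ β : TropHom k N M, ∀ v : M, β.toFun (α.toFun v) = v := by
  choose β hβ using fun w => hstraight.exists_isGLB hto hqc hrefl (hlight w)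
  refine ⟨⟨β, ?_, fun w₁ w₂ => ?_, fun a w => ?_⟩, fun v => ?_⟩
  · exact (hβ 0).unique α.isGLB_preimage_Ici_zero
  · exact (hβ _).unique (α.isGLB_preimage_Ici_add hto hqc hrefl hstraight hlight (hβ w₁) (hβ w₂))
  · exact (hβ _).unique (α.isGLB_preimage_Ici_smul (hβ w) a)
  · exact (hβ _).unique (α.isGLB_preimage_Ici_map hinj v)

theorem stmt1 {k M N : Type*} [TropSemifield k] [TropSemigroup M] [TropModule k M]
    [TropSemigroup N] [TropModule k N]
    (hto : TotallyOrderedTSF k) (hqc : QuasiCompleteTSF k) (hrat : RationalTSF k)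
    (α : TropHom k M N) (hinj : Function.Injective α.toFun)
    (hlight : LightlySurjective α) (hstraight : Straight M)
    (hrefl : Function.Bijective (iotaFun k M)) :
    ∃ β : TropHom k N M, ∀ v : M, β.toFun (α.toFun v) = v :=
  stmt1_general hto hqc α hinj hlight hstraight hrefl
end

section
/- Let k be a quasi-complete totally ordered rational tropical semifield and let α : M → N be an injective homomorphism of finitely generated straight reflexive k-modules. Then (1) dim(M) ≤ dim(N), and (2) if dim(M) = dim(N) then α is lightly surjective. -/
/-!
Over a totally ordered `k`, a minimal generating set of a finitely generated module whose points
are separated by functionals consists of extremal elements, exactly one on each extremal ray, so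
the dimension is the size of such a basis.

For an extremal generator `t` of `N`, the residuation `w ↦ max {a | a ⊙ t ≤ w}` exists by
quasi-completeness and is additive by straightness, hence a functional `η_t`; and every `w` is
recovered as `⊕_t η_t(w) ⊙ t`. So the `dim N` functionals `η_t ∘ α` separate the points of `M`.

A tropical Hall/Cramer argument shows that more than `m` vectors of `kᵐ` satisfy a nontrivial
relation in which every term is dominated by the others. Applied to the values of the `η_t ∘ α`
on the extremal generators of `M`, it would place a maximal term `λ ⊙ s` below the sum of the
others, hence (straightness) below one of them, on a different ray: impossible. So
`dim M ≤ dim N`. If the dimensions agree, no `η_t ∘ α` vanishes identically, and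
`α (⊕_t (η_t(w) ⊘ η_t(α v_t)) ⊙ v_t) ≥ w` for suitable `v_t`.
-/

instance (priority := 100) TropModule.toModule (k M : Type*) [TropSemifield k] [TropSemigroup M]
    [TropModule k M] : Module k M where
  mul_smul := TropModule.mul_smul
  one_smul := TropModule.one_smul
  add_smul := TropModule.add_smul
  smul_add := TropModule.smul_add
  zero_smul := TropModule.zero_smul
  smul_zero := TropModule.smul_zero

local infix:50 " ≼ " => tle

section Order

variable {M : Type*} [TropSemigroup M]

theorem tle_refl (v : M) : v ≼ v := TropSemigroup.add_idem v

theorem tle_trans {u v w : M} (h₁ : u ≼ v) (h₂ : v ≼ w) : u ≼ w := by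
  unfold tle at *
  rw [← h₂, ← add_assoc, h₁]

theorem tle_antisymm {v w : M} (h₁ : v ≼ w) (h₂ : w ≼ v) : v = w := by
  unfold tle at *
  rw [← h₂, add_comm, h₁]

theorem zero_tle (v : M) : 0 ≼ v := zero_add v

theorem eq_zero_of_tle_zero {v : M} (h : v ≼ 0) : v = 0 := by
  rwa [tle, add_zero] at h

theorem tle_add_left (v w : M) : v ≼ v + w := by
  rw [tle, ← add_assoc, TropSemigroup.add_idem]

theorem tle_add_right (v w : M) : w ≼ v + w :=
  add_comm w v ▸ tle_add_left w v

theorem add_tle {u v w : M} (h₁ : u ≼ w) (h₂ : v ≼ w) : u + v ≼ w := by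
  unfold tle at *
  rw [add_assoc, h₂, h₁]

theorem tle_sum {ι : Type*} {s : Finset ι} {f : ι → M} {i : ι} (hi : i ∈ s) :
    f i ≼ ∑ j ∈ s, f j := by
  classical
  rw [← Finset.add_sum_erase s f hi]
  exact tle_add_left _ _

theorem sum_tle {ι : Type*} {s : Finset ι} {f : ι → M} {u : M} (h : ∀ i ∈ s, f i ≼ u) :
    ∑ i ∈ s, f i ≼ u := by
  classical
  induction s using Finset.induction_on with
  | empty => exact zero_tle u
  | insert i s hi ih =>
    rw [Finset.sum_insert hi]
    exact add_tle (h i (s.mem_insert_self i)) (ih fun j hj => h j (Finset.mem_insert_of_mem hj))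

theorem sum_tle_sum {ι : Type*} {s : Finset ι} {f g : ι → M} (h : ∀ i ∈ s, f i ≼ g i) :
    ∑ i ∈ s, f i ≼ ∑ i ∈ s, g i :=
  sum_tle fun i hi => tle_trans (h i hi) (tle_sum hi)

theorem sum_tle_sum_of_subset {ι : Type*} {s t : Finset ι} (f : ι → M) (h : s ⊆ t) :
    ∑ i ∈ s, f i ≼ ∑ i ∈ t, f i :=
  sum_tle fun _ hi => tle_sum (h hi)

end Order

namespace TropSemifield

variable {k : Type*} [TropSemifield k]

theorem mul_tinv {a : k} (ha : a ≠ 0) : a * tinv a = 1 := by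
  rw [tinv, dif_neg ha]
  exact Classical.choose_spec (TropSemifield.exists_inv a ha)

instance : IsLeftCancelMulZero k :=
  ⟨fun {a} ha b c h => by
    simpa [← mul_assoc, mul_comm (tinv a) a, mul_tinv ha] using congrArg (tinv a * ·) h⟩

theorem tle_mul_right {a b : k} (c : k) (h : a ≼ b) : a * c ≼ b * c := by
  rw [tle, ← add_mul, h]

theorem tle_mul_left {a b : k} (c : k) (h : a ≼ b) : c * a ≼ c * b := by
  rw [tle, ← mul_add, h]

theorem eq_of_eq_mul_add (hto : TotallyOrderedTSF k) {c x y : k} (hc : c ≠ 1)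
    (h : x = c * x + y) : x = y := by
  rcases hto (c * x) y with hle | hle
  · exact h.trans hle
  · have hx : x = c * x := h.trans ((add_comm _ _).trans hle)
    by_cases hx0 : x = 0
    · have hy : y ≼ x := h ▸ tle_add_right _ _
      rw [hx0] at hy ⊢
      exact (eq_zero_of_tle_zero hy).symm
    · refine absurd (mul_left_cancel₀ (b := c) (c := 1) hx0 ?_) hc
      rw [mul_one, mul_comm]
      exact hx.symm

end TropSemifield

open TropSemifield

section Module

variable {k X : Type*} [TropSemifield k] [TropSemigroup X] [TropModule k X]

theorem one_ne_zero_of_ne_zero {v : X} (hv : v ≠ 0) : (1 : k) ≠ 0 :=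
  fun h => hv (by rw [← one_smul k v, h, zero_smul])

theorem smul_tle_smul_right {a b : k} (v : X) (h : a ≼ b) : a • v ≼ b • v := by
  rw [tle, ← add_smul, h]

theorem smul_tle_smul_left (a : k) {v w : X} (h : v ≼ w) : a • v ≼ a • w := by
  rw [tle, ← smul_add, h]

theorem tinv_smul_smul {a : k} (ha : a ≠ 0) (v : X) : tinv a • a • v = v := by
  rw [← mul_smul, mul_comm, mul_tinv ha, one_smul]

theorem smul_ne_zero_of_ne_zero {a : k} (ha : a ≠ 0) {v : X} (hv : v ≠ 0) : a • v ≠ 0 :=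
  fun h => hv (by rw [← tinv_smul_smul ha v, h, smul_zero])

theorem tray_smul {a : k} (ha : a ≠ 0) (e : X) : tray k (a • e) = tray k e := by
  ext v
  constructor
  · rintro ⟨b, rfl⟩
    exact ⟨b * a, mul_smul b a e⟩
  · rintro ⟨b, rfl⟩
    refine ⟨b * tinv a, ?_⟩
    show (b * tinv a) • a • e = b • e
    rw [mul_smul, tinv_smul_smul ha]

theorem TExtremal.smul {e : X} (he : TExtremal e) {a : k} (ha : a ≠ 0) : TExtremal (a • e) := by
  refine ⟨smul_ne_zero_of_ne_zero ha he.1, fun v w h => ?_⟩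
  have h' : tinv a • v + tinv a • w = e := by rw [← smul_add, h, tinv_smul_smul ha]
  have hback : ∀ u : X, tinv a • u = e → u = a • e := fun u hu => by
    rw [← hu, ← mul_smul, mul_tinv ha, one_smul]
  exact (he.2 _ _ h').imp (hback v) (hback w)

theorem TExtremal.exists_eq_of_sum_eq {e : X} (he : TExtremal e) {ι : Type*} {s : Finset ι}
    {f : ι → X} (h : ∑ i ∈ s, f i = e) : ∃ i ∈ s, f i = e := by
  classical
  induction s using Finset.induction_on with
  | empty => exact absurd h.symm he.1
  | insert i s hi ih =>
    rw [Finset.sum_insert hi] at h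
    rcases he.2 _ _ h with h₁ | h₁
    · exact ⟨i, s.mem_insert_self i, h₁⟩
    · obtain ⟨j, hj, hfj⟩ := ih h₁
      exact ⟨j, Finset.mem_insert_of_mem hj, hfj⟩

/-- Straightness: `e = inf(v ⊕ w, e) = inf(v, e) ⊕ inf(w, e)`, and `e` is extremal. -/
theorem TExtremal.tle_or_tle_of_tle_add (hs : Straight X) {e : X} (he : TExtremal e) {v w : X}
    (h : e ≼ v + w) : e ≼ v ∨ e ≼ w := by
  obtain ⟨z₁, hz₁⟩ := hs.1 v e
  obtain ⟨z₂, hz₂⟩ := hs.1 w e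
  have hinf := hs.2 v w e z₁ z₂ hz₁ hz₂
  have he_eq : z₁ + z₂ = e := tle_antisymm hinf.2.1 (hinf.2.2 e h (tle_refl e))
  rcases he.2 z₁ z₂ he_eq with rfl | rfl
  · exact Or.inl hz₁.1
  · exact Or.inr hz₂.1

theorem TExtremal.exists_tle_of_tle_sum (hs : Straight X) {e : X} (he : TExtremal e) {ι : Type*}
    {s : Finset ι} {f : ι → X} (h : e ≼ ∑ i ∈ s, f i) : ∃ i ∈ s, e ≼ f i := by
  classical
  induction s using Finset.induction_on with
  | empty => exact absurd (eq_zero_of_tle_zero h) he.1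
  | insert i s hi ih =>
    rw [Finset.sum_insert hi] at h
    rcases he.tle_or_tle_of_tle_add hs h with h₁ | h₁
    · exact ⟨i, s.mem_insert_self i, h₁⟩
    · obtain ⟨j, hj, hfj⟩ := ih h₁
      exact ⟨j, Finset.mem_insert_of_mem hj, hfj⟩

end Module

namespace TropHom

variable {k M N P : Type*} [TropSemifield k] [TropSemigroup M] [TropModule k M]
  [TropSemigroup N] [TropModule k N] [TropSemigroup P] [TropModule k P]

def toLinearMap (f : TropHom k M N) : M →ₗ[k] N where
  toFun := f.toFun
  map_add' := f.map_add'
  map_smul' := f.map_smul'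

theorem map_sum (f : TropHom k M N) {ι : Type*} (s : Finset ι) (g : ι → M) :
    f.toFun (∑ i ∈ s, g i) = ∑ i ∈ s, f.toFun (g i) :=
  _root_.map_sum f.toLinearMap g s

theorem map_tle (f : TropHom k M N) {v w : M} (h : v ≼ w) : f.toFun v ≼ f.toFun w := by
  rw [tle, ← f.map_add', h]

def comp (g : TropHom k N P) (f : TropHom k M N) : TropHom k M P where
  toFun := g.toFun ∘ f.toFun
  map_zero' := by simp only [Function.comp_apply, f.map_zero', g.map_zero']
  map_add' v w := by simp only [Function.comp_apply, f.map_add', g.map_add']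
  map_smul' a v := by simp only [Function.comp_apply, f.map_smul', g.map_smul']

end TropHom

section Basis

variable {k X : Type*} [TropSemifield k] [TropSemigroup X] [TropModule k X]

theorem tGenerates_iff_span_eq_top (S : Set X) : TGenerates k S ↔ Submodule.span k S = ⊤ := by
  simp only [Submodule.eq_top_iff', Submodule.mem_span_set']
  refine forall_congr' fun v => ⟨?_, ?_⟩
  · rintro ⟨r, a, x, hx, rfl⟩
    exact ⟨r, a, fun i => ⟨x i, hx i⟩, rfl⟩
  · rintro ⟨r, a, x, rfl⟩
    exact ⟨r, a, fun i => x i, fun i => (x i).2, rfl⟩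

theorem TGenerates.exists_eq_sum {S : Finset X} (hS : TGenerates k (S : Set X)) (v : X) :
    ∃ c : X → k, v = ∑ x ∈ S, c x • x := by
  obtain ⟨c, -, hc⟩ :=
    Submodule.mem_span_finset.1 (((tGenerates_iff_span_eq_top _).1 hS).symm ▸ Submodule.mem_top)
  exact ⟨c, hc.symm⟩

theorem TGenerates.erase [DecidableEq X] {S : Finset X} (hS : TGenerates k (S : Set X)) {s : X}
    (hs : s ∈ Submodule.span k (S.erase s : Set X)) : TGenerates k (S.erase s : Set X) := by
  rw [tGenerates_iff_span_eq_top] at hS ⊢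
  refine eq_top_iff.2 (hS ▸ Submodule.span_le.2 fun x hx => ?_)
  by_cases hxs : x = s
  · exact hxs ▸ hs
  · exact Submodule.subset_span (Finset.mem_erase.2 ⟨hxs, hx⟩)

theorem exists_tBasis (hfg : TFG k X) : ∃ S : Finset X, TBasis k (S : Set X) := by
  obtain ⟨S₀, hS₀⟩ := hfg
  have hfin : {T : Set X | T ⊆ S₀ ∧ TGenerates k T}.Finite :=
    S₀.finite_toSet.finite_subsets.subset fun T hT => hT.1
  obtain ⟨T, ⟨hTS₀, hT⟩, hmin⟩ := hfin.exists_minimal ⟨S₀, subset_rfl, hS₀⟩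
  have hTfin : T.Finite := S₀.finite_toSet.subset hTS₀
  refine ⟨hTfin.toFinset, by rw [hTfin.coe_toFinset]; exact hT, fun U hU hUgen => ?_⟩
  rw [hTfin.coe_toFinset] at hU
  exact hU.2 (hmin ⟨hU.1.trans hTS₀, hUgen⟩ hU.1)

theorem TBasis.not_tGenerates_erase [DecidableEq X] {S : Finset X} (hS : TBasis k (S : Set X))
    {s : X} (hs : s ∈ S) : ¬ TGenerates k (S.erase s : Set X) :=
  hS.2 _ (Finset.coe_ssubset.2 (Finset.erase_ssubset hs))

end Basis

section Separation

variable {k X : Type*} [TropSemifield k] [TropSemigroup X] [TropModule k X]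

theorem eq_of_forall_hom_eq (hι : Function.Injective (iotaFun k X)) {v w : X}
    (h : ∀ ξ : TropHom k X k, ξ.toFun v = ξ.toFun w) : v = w :=
  hι (TropHom.ext' h)

theorem tle_of_forall_hom_tle (hι : Function.Injective (iotaFun k X)) {v w : X}
    (h : ∀ ξ : TropHom k X k, ξ.toFun v ≼ ξ.toFun w) : v ≼ w :=
  eq_of_forall_hom_eq hι fun ξ => (ξ.map_add' v w).trans (h ξ)

theorem exists_hom_ne_zero (hι : Function.Injective (iotaFun k X)) {v : X} (hv : v ≠ 0) :
    ∃ ξ : TropHom k X k, ξ.toFun v ≠ 0 := by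
  by_contra! h
  exact hv (eq_of_forall_hom_eq hι fun ξ => (h ξ).trans ξ.map_zero'.symm)

end Separation

section ExtremalBasis

variable {k X : Type*} [TropSemifield k] [TropSemigroup X] [TropModule k X]
  {S : Finset X} {s : X}

/-- Were `c s ≠ 1`, every functional would identify `s = c s ⊙ s ⊕ (rest)` with the rest,
so `s` would lie in the span of the other generators. -/
theorem TBasis.coeff_self_eq_one (hto : TotallyOrderedTSF k)
    (hι : Function.Injective (iotaFun k X)) (hS : TBasis k (S : Set X)) (hs : s ∈ S)
    {c : X → k} (h : s = ∑ x ∈ S, c x • x) : c s = 1 := by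
  classical
  by_contra hc
  refine hS.not_tGenerates_erase hs (hS.1.erase ?_)
  have hrest : s = ∑ x ∈ S.erase s, c x • x := by
    refine eq_of_forall_hom_eq hι fun ξ => eq_of_eq_mul_add hto hc ?_
    conv_lhs => rw [h, ← Finset.add_sum_erase S _ hs, ξ.map_add', ξ.map_smul']
    rfl
  have hmem : ∑ x ∈ S.erase s, c x • x ∈ Submodule.span k (S.erase s : Set X) :=
    Submodule.sum_mem _ fun x hx => Submodule.smul_mem _ _ (Submodule.subset_span hx)
  rwa [← hrest] at hmem

theorem tle_of_eq_sum_of_coeff_eq_one {u : X} {c : X → k} (hu : u = ∑ x ∈ S, c x • x)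
    (hs : s ∈ S) (hcs : c s = 1) : s ≼ u := by
  rw [hu, ← one_smul k s, ← hcs]
  exact tle_sum (f := fun x => c x • x) hs

theorem TBasis.ne_zero (hS : TBasis k (S : Set X)) (hs : s ∈ S) : s ≠ 0 := by
  classical
  rintro rfl
  exact hS.not_tGenerates_erase hs (hS.1.erase (Submodule.zero_mem _))

theorem TBasis.extremal (hto : TotallyOrderedTSF k) (hι : Function.Injective (iotaFun k X))
    (hS : TBasis k (S : Set X)) (hs : s ∈ S) : TExtremal s := by
  refine ⟨hS.ne_zero hs, fun v w hvw => ?_⟩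
  obtain ⟨a, ha⟩ := hS.1.exists_eq_sum v
  obtain ⟨b, hb⟩ := hS.1.exists_eq_sum w
  have hsum : a s + b s = 1 := by
    refine hS.coeff_self_eq_one hto hι hs (c := a + b) ?_
    simp only [Pi.add_apply, add_smul, Finset.sum_add_distrib, ← ha, ← hb, hvw]
  rcases hto (a s) (b s) with hab | hab
  · have hb1 : b s = 1 := hab ▸ hsum
    exact Or.inr (tle_antisymm (hvw ▸ tle_add_right v w) (tle_of_eq_sum_of_coeff_eq_one hb hs hb1))
  · have ha1 : a s = 1 := by rwa [add_comm, hab] at hsum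
    exact Or.inl (tle_antisymm (hvw ▸ tle_add_left v w) (tle_of_eq_sum_of_coeff_eq_one ha hs ha1))

theorem TBasis.injOn_tray (hS : TBasis k (S : Set X)) : Set.InjOn (tray k) (S : Set X) := by
  classical
  intro s hs s' hs' hray
  by_contra hne
  obtain ⟨c, hc⟩ : s' ∈ tray k s := hray ▸ ⟨1, one_smul k s'⟩
  have hmem : c • s ∈ Submodule.span k (S.erase s' : Set X) :=
    Submodule.smul_mem _ c (Submodule.subset_span (Finset.mem_erase.2 ⟨hne, hs⟩))
  exact hS.not_tGenerates_erase hs' (hS.1.erase (hc ▸ hmem))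

theorem TBasis.extRays_eq (hto : TotallyOrderedTSF k) (hι : Function.Injective (iotaFun k X))
    (hS : TBasis k (S : Set X)) : extRays k X = tray k '' (S : Set X) := by
  ext R
  constructor
  · rintro ⟨e, he, rfl⟩
    obtain ⟨c, hc⟩ := hS.1.exists_eq_sum e
    obtain ⟨x, hx, hxe⟩ := he.exists_eq_of_sum_eq hc.symm
    have hcx : c x ≠ 0 := fun h0 => he.1 (by rw [← hxe, h0, zero_smul])
    exact ⟨x, hx, by rw [← hxe, tray_smul hcx]⟩
  · rintro ⟨s, hs, rfl⟩
    exact ⟨s, hS.extremal hto hι hs, rfl⟩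

theorem TBasis.tdim_eq_card (hto : TotallyOrderedTSF k) (hι : Function.Injective (iotaFun k X))
    (hS : TBasis k (S : Set X)) : tdim k X = S.card := by
  rw [tdim, hS.extRays_eq hto hι, hS.injOn_tray.ncard_image, Set.ncard_coe_finset]

end ExtremalBasis

section Residuation

variable {k X : Type*} [TropSemifield k] [TropSemigroup X] [TropModule k X]

def IsResiduation (f : X) (θ : X → k) : Prop :=
  ∀ (a : k) (v : X), a • f ≼ v ↔ a ≼ θ v

variable {f : X} {θ : X → k}

theorem IsResiduation.smul_tle (h : IsResiduation f θ) (v : X) : θ v • f ≼ v :=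
  (h _ v).2 (tle_refl _)

theorem IsResiduation.map_zero (h : IsResiduation f θ) (hf : f ≠ 0) : θ 0 = 0 := by
  by_contra h0
  exact smul_ne_zero_of_ne_zero h0 hf (eq_zero_of_tle_zero (h.smul_tle 0))

theorem IsResiduation.map_add (h : IsResiduation f θ) (hs : Straight X) (hf : TExtremal f)
    (v w : X) : θ (v + w) = θ v + θ w := by
  refine tle_antisymm ?_ ((h _ _).1 ?_)
  · by_cases h0 : θ (v + w) = 0
    · exact h0 ▸ zero_tle _
    · rcases (hf.smul h0).tle_or_tle_of_tle_add hs (h.smul_tle (v + w)) with hv | hw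
      · exact tle_trans ((h _ v).1 hv) (tle_add_left _ _)
      · exact tle_trans ((h _ w).1 hw) (tle_add_right _ _)
  · rw [add_smul]
    exact add_tle (tle_trans (h.smul_tle v) (tle_add_left v w))
      (tle_trans (h.smul_tle w) (tle_add_right v w))

theorem IsResiduation.map_smul (h : IsResiduation f θ) (hf : f ≠ 0) (a : k) (v : X) :
    θ (a • v) = a * θ v := by
  by_cases ha : a = 0
  · rw [ha, zero_smul, h.map_zero hf, zero_mul]
  refine tle_antisymm ?_ ((h _ _).1 (mul_smul a (θ v) f ▸ smul_tle_smul_left a (h.smul_tle v)))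
  have hv : (tinv a * θ (a • v)) • f ≼ v := by
    have h' := smul_tle_smul_left (tinv a) (h.smul_tle (a • v))
    rwa [tinv_smul_smul ha, ← mul_smul] at h'
  simpa only [← mul_assoc, mul_tinv ha, one_mul] using tle_mul_left a ((h _ v).1 hv)

theorem tle_mul_tinv_of_smul_tle {ξ : TropHom k X k} (hξ : ξ.toFun f ≠ 0) {a : k} {v : X}
    (h : a • f ≼ v) : a ≼ ξ.toFun v * tinv (ξ.toFun f) := by
  have h' := tle_mul_right (tinv (ξ.toFun f)) (ξ.map_tle h)
  rwa [ξ.map_smul', smul_eq_mul, mul_assoc, mul_tinv hξ, mul_one] at h'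

/-- The supremum of `{a | a ⊙ f ≤ v}` exists since the set is bounded by `⟨v,ξ⟩ ⊘ ⟨f,ξ⟩`
for any `ξ` with `⟨f,ξ⟩ ≠ −∞`, and it is attained because such bounds test `≤` in `X`. -/
theorem exists_residuation_value (hqc : QuasiCompleteTSF k)
    (hι : Function.Injective (iotaFun k X)) (hf : f ≠ 0) (v : X) :
    ∃ c : k, ∀ a : k, a • f ≼ v ↔ a ≼ c := by
  obtain ⟨ξ₀, hξ₀⟩ := exists_hom_ne_zero hι hf
  obtain ⟨c, hc_lower, hc_greatest⟩ := hqc {b : k | ∀ a : k, a • f ≼ v → a ≼ b}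
    ⟨_, fun a ha => tle_mul_tinv_of_smul_tle hξ₀ ha⟩
  have hcf : c • f ≼ v := by
    refine tle_of_forall_hom_tle hι fun ξ => ?_
    rw [ξ.map_smul', smul_eq_mul]
    by_cases hξ : ξ.toFun f = 0
    · rw [hξ, mul_zero]
      exact zero_tle _
    · have h := tle_mul_right (ξ.toFun f)
        (hc_lower _ fun a ha => tle_mul_tinv_of_smul_tle hξ ha)
      rwa [mul_assoc, mul_comm (tinv _), mul_tinv hξ, mul_one] at h
  exact ⟨c, fun a => ⟨fun ha => hc_greatest a fun b hb => hb a ha,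
    fun ha => tle_trans (smul_tle_smul_right f ha) hcf⟩⟩

theorem exists_isResiduation_hom (hqc : QuasiCompleteTSF k)
    (hι : Function.Injective (iotaFun k X)) (hs : Straight X) (hf : TExtremal f) :
    ∃ η : TropHom k X k, IsResiduation f η.toFun := by
  choose θ hθ using exists_residuation_value hqc hι hf.1
  have h : IsResiduation f θ := fun a v => hθ v a
  exact ⟨⟨θ, h.map_zero hf.1, h.map_add hs hf, h.map_smul hf.1⟩, h⟩

variable {S : Finset X} {D : S → TropHom k X k}

theorem eq_sum_residuation (hS : TGenerates k (S : Set X))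
    (hD : ∀ s : S, IsResiduation (s : X) (D s).toFun) (v : X) :
    v = ∑ s : S, (D s).toFun v • (s : X) := by
  refine tle_antisymm ?_ (sum_tle fun s _ => (hD s).smul_tle v)
  obtain ⟨c, hc⟩ := hS.exists_eq_sum v
  conv_lhs => rw [hc]
  refine sum_tle fun x hx => ?_
  have hcx : c x ≼ (D ⟨x, hx⟩).toFun v :=
    (hD ⟨x, hx⟩ _ v).1 (hc ▸ tle_sum (f := fun x => c x • x) hx)
  exact tle_trans (smul_tle_smul_right x hcx)
    (tle_sum (f := fun s : S => (D s).toFun v • (s : X)) (Finset.mem_univ (⟨x, hx⟩ : S)))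

theorem tle_of_forall_residuation_tle (hS : TGenerates k (S : Set X))
    (hD : ∀ s : S, IsResiduation (s : X) (D s).toFun) {v w : X}
    (h : ∀ s : S, (D s).toFun v ≼ (D s).toFun w) : v ≼ w := by
  rw [eq_sum_residuation hS hD v, eq_sum_residuation hS hD w]
  exact sum_tle_sum fun s _ => smul_tle_smul_right _ (h s)

end Residuation

section SwapProduct

variable {k : Type*} [TropSemifield k] {R C : Type*} [Fintype C] [DecidableEq C]

/-- `none` plays the role of a second copy of column `j`. -/
theorem prod_swap_eq (A : R → C → k) (β : Option C ↪ R) (j : C) :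
    (∏ j', A (β (Equiv.swap none (some j) (some j'))) j') * A (β (Equiv.swap none (some j) none)) j
      = (∏ j', A (β (some j')) j') * A (β none) j := by
  have hcol : ∀ o : Option C, (Equiv.swap none (some j) o).getD j = o.getD j := by
    intro o
    rcases eq_or_ne o none with rfl | h₁
    · simp
    rcases eq_or_ne o (some j) with rfl | h₂
    · simp
    · rw [Equiv.swap_apply_of_ne_of_ne h₁ h₂]
  have hprod : ∀ γ : Option C → R,
      (∏ j', A (γ (some j')) j') * A (γ none) j = ∏ o, A (γ o) (o.getD j) := fun γ => by
    rw [Fintype.prod_option, mul_comm]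
    rfl
  rw [hprod fun o => β (Equiv.swap none (some j) o), hprod β]
  calc ∏ o, A (β (Equiv.swap none (some j) o)) (o.getD j)
      = ∏ o, A (β (Equiv.swap none (some j) o)) ((Equiv.swap none (some j) o).getD j) := by
        simp only [hcol]
    _ = ∏ o, A (β o) (o.getD j) := Equiv.prod_comp _ fun o => A (β o) (o.getD j)

end SwapProduct

section TropicalDependence

variable {k : Type*} [TropSemifield k] {R C : Type*} [Fintype R] [DecidableEq R]

def IsTropRelation (lam : R → k) (A : R → C → k) : Prop :=
  ∀ i₀ j, lam i₀ * A i₀ j ≼ ∑ i ∈ Finset.univ.erase i₀, lam i * A i j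

theorem IsTropRelation.sum_erase_eq {lam : R → k} {A : R → C → k} (h : IsTropRelation lam A)
    (i₀ : R) (j : C) : ∑ i ∈ Finset.univ.erase i₀, lam i * A i j = ∑ i, lam i * A i j := by
  rw [← Finset.add_sum_erase _ _ (Finset.mem_univ i₀)]
  exact (h i₀ j).symm

theorem IsTropRelation.extend {p : R → Prop} [DecidablePred p] {q : C → Prop} [DecidablePred q]
    {A : R → C → k} {lam : {i // p i} → k}
    (h : IsTropRelation lam fun (i : {i // p i}) (j : {j // q j}) => A i j)
    (hA : ∀ i j, p i → ¬ q j → A i j = 0) :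
    IsTropRelation (fun i => if hi : p i then lam ⟨i, hi⟩ else 0) A := by
  intro i₀ j
  dsimp only
  by_cases hi₀ : p i₀
  swap
  · simpa only [dif_neg hi₀, zero_mul] using zero_tle _
  by_cases hj : q j
  swap
  · simpa only [hA i₀ j hi₀ hj, mul_zero] using zero_tle _
  have hsub : (Finset.univ.erase (⟨i₀, hi₀⟩ : {i // p i})).map (Function.Embedding.subtype p) ⊆
      Finset.univ.erase i₀ := by
    intro i hi
    obtain ⟨i', hi', rfl⟩ := Finset.mem_map.1 hi
    exact Finset.mem_erase.2 ⟨fun h' => (Finset.mem_erase.1 hi').1 (Subtype.ext h'),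
      Finset.mem_univ _⟩
  have hsum : ∑ i ∈ Finset.univ.erase ⟨i₀, hi₀⟩, lam i * A i j =
      ∑ x ∈ (Finset.univ.erase ⟨i₀, hi₀⟩).map (Function.Embedding.subtype p),
        (if hx : p x then lam ⟨x, hx⟩ else 0) * A x j := by
    rw [Finset.sum_map]
    exact Finset.sum_congr rfl fun i _ => by rw [Function.Embedding.subtype_apply, dif_pos i.2]
  rw [dif_pos hi₀]
  exact tle_trans (hsum ▸ h ⟨i₀, hi₀⟩ ⟨j, hj⟩) (sum_tle_sum_of_subset _ hsub)

variable [Fintype C]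

/-- Tropical analogue of the cofactor vector of Cramer's rule: the sum of the permanents of the
`#C × #C` minors of `A` that avoid row `i`. -/
noncomputable def cofactorPerm (A : R → C → k) (i : R) : k :=
  ∑ β : Option C ↪ R with β none = i, ∏ j, A (β (some j)) j

/-- A term `∏ j', A (β (some j')) j' * A (β none) j` of `cofactorPerm A i₀ * A i₀ j` reappears,
for `β ∘ swap none (some j)`, as a term of `cofactorPerm A i * A i j` with `i = β (some j) ≠ i₀`. -/
theorem isTropRelation_cofactorPerm (A : R → C → k) : IsTropRelation (cofactorPerm A) A := by
  classical
  intro i₀ j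
  rw [cofactorPerm, Finset.sum_mul]
  refine sum_tle fun β hβ => ?_
  rw [← (Finset.mem_filter.1 hβ).2]
  set β' := (Equiv.swap none (some j)).toEmbedding.trans β
  have hne : β' none ≠ β none := fun h => by simpa [β'] using β.injective h
  rw [← prod_swap_eq A β j]
  refine tle_trans (tle_mul_right _ ?_)
    (tle_sum (f := fun i => cofactorPerm A i * A i j) (Finset.mem_erase.2 ⟨hne, Finset.mem_univ _⟩))
  exact tle_sum (f := fun β : Option C ↪ R => ∏ j', A (β (some j')) j') (i := β')
    (by simp [β'])

theorem cofactorPerm_ne_zero (h10 : (1 : k) ≠ 0) {A : R → C → k} {τ : C ↪ R}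
    (hτ : ∀ j, A (τ j) j ≠ 0) {i : R} (hi : i ∉ Set.range τ) : cofactorPerm A i ≠ 0 := by
  have hprod : ∏ j, A (τ j) j ≠ 0 :=
    Finset.prod_induction _ (· ≠ 0) (fun _ _ => mul_ne_zero) h10 fun j _ => hτ j
  have hle : ∏ j, A (τ j) j ≼ cofactorPerm A i :=
    tle_sum (f := fun β : Option C ↪ R => ∏ j, A (β (some j)) j) (i := τ.optionElim i hi)
      (by simp)
  exact fun h0 => hprod (eq_zero_of_tle_zero (h0 ▸ hle))

/-- If Hall's condition holds for the supports of the columns, the cofactor vector is a nonzero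
relation; otherwise a set `B` of columns whose support `NB` has fewer than `#B` rows can be
removed together with `NB`, and a relation of the smaller matrix extends by zero. -/
theorem exists_isTropRelation (h10 : (1 : k) ≠ 0) (A : R → C → k)
    (hcard : Fintype.card C < Fintype.card R) :
    ∃ lam : R → k, (∃ i, lam i ≠ 0) ∧ IsTropRelation lam A := by
  classical
  induction hn : Fintype.card C using Nat.strong_induction_on generalizing R C with
  | _ n ih =>
  set supp : C → Finset R := fun j => Finset.univ.filter (A · j ≠ 0)
  by_cases hHall : ∀ B : Finset C, B.card ≤ (B.biUnion supp).card
  · obtain ⟨τ, hτinj, hτ⟩ := (Finset.all_card_le_biUnion_card_iff_exists_injective supp).1 hHall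
    obtain ⟨i, hi⟩ : ∃ i, i ∉ Set.range τ := by
      by_contra! h
      exact hcard.not_ge (Fintype.card_le_of_surjective τ h)
    exact ⟨cofactorPerm A, ⟨i, cofactorPerm_ne_zero h10 (τ := ⟨τ, hτinj⟩)
      (fun j => (Finset.mem_filter.1 (hτ j)).2) hi⟩, isTropRelation_cofactorPerm A⟩
  push Not at hHall
  obtain ⟨B, hB⟩ := hHall
  set NB := B.biUnion supp
  have hBC := B.card_le_univ
  have hNBR := NB.card_le_univ
  have hcardC : Fintype.card {j // j ∉ B} = n - B.card := by
    rw [Fintype.card_subtype_compl, Fintype.card_coe, hn]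
  have hcardR : Fintype.card {i // i ∉ NB} = Fintype.card R - NB.card := by
    rw [Fintype.card_subtype_compl, Fintype.card_coe]
  obtain ⟨lam, ⟨i, hi⟩, hlam⟩ :=
    ih _ (by omega) (fun (i : {i // i ∉ NB}) (j : {j // j ∉ B}) => A i j) (by omega) rfl
  refine ⟨_, ⟨i, by simpa only [dif_pos i.2] using hi⟩, hlam.extend fun i j hi hj => ?_⟩
  by_contra hA
  exact hi (Finset.mem_biUnion.2 ⟨j, not_not.1 hj, Finset.mem_filter.2 ⟨Finset.mem_univ i, hA⟩⟩)

end TropicalDependence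

section Independence

variable {k X : Type*} [TropSemifield k] [TropSemigroup X] [TropModule k X]

/-- If `lam ≠ 0`, a term `lam i₀ ⊙ e i₀` maximal among the nonzero terms cannot lie below the sum
of the other terms: it would lie below one of them, which then lies on the same ray. -/
theorem exists_sum_erase_ne_sum (hs : Straight X) {ι : Type*} [Fintype ι] [DecidableEq ι]
    {e : ι → X} (he : ∀ i, TExtremal (e i)) (hray : Function.Injective (tray k ∘ e))
    {lam : ι → k} (hlam : ∃ i, lam i ≠ 0) :
    ∃ i₀, ∑ i ∈ Finset.univ.erase i₀, lam i • e i ≠ ∑ i, lam i • e i := by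
  classical
  let _ : LE ι := ⟨fun i j => lam i • e i ≼ lam j • e j⟩
  have : IsTrans ι (· ≤ ·) := ⟨fun _ _ _ => tle_trans⟩
  obtain ⟨i₁, hi₁⟩ := hlam
  obtain ⟨i₀, hi₀, hmax⟩ :=
    Finset.exists_maximal (s := Finset.univ.filter (lam · ≠ 0)) ⟨i₁, by simpa using hi₁⟩
  have hlam₀ : lam i₀ ≠ 0 := (Finset.mem_filter.1 hi₀).2
  refine ⟨i₀, fun heq => ?_⟩
  obtain ⟨i, hi, hle⟩ := ((he i₀).smul hlam₀).exists_tle_of_tle_sum hs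
    (heq ▸ tle_sum (f := fun i => lam i • e i) (Finset.mem_univ i₀))
  have hlam_i : lam i ≠ 0 := fun h0 =>
    ((he i₀).smul hlam₀).1 (eq_zero_of_tle_zero (by rwa [h0, zero_smul] at hle))
  have hsame : lam i₀ • e i₀ = lam i • e i :=
    tle_antisymm hle (hmax (Finset.mem_filter.2 ⟨Finset.mem_univ i, hlam_i⟩) hle)
  refine (Finset.mem_erase.1 hi).1 (hray ?_)
  simp only [Function.comp_apply]
  rw [← tray_smul hlam_i (e i), ← tray_smul hlam₀ (e i₀), hsame]

def SeparatesPoints {C : Type*} (ξ : C → TropHom k X k) : Prop :=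
  ∀ v w : X, (∀ j, (ξ j).toFun v = (ξ j).toFun w) → v = w

theorem card_le_of_separatesPoints (hs : Straight X) {S : Finset X}
    (hext : ∀ s ∈ S, TExtremal s) (hray : Set.InjOn (tray k) (S : Set X)) {C : Type*}
    [Fintype C] {ξ : C → TropHom k X k} (hsep : SeparatesPoints ξ) :
    S.card ≤ Fintype.card C := by
  classical
  by_contra! hlt
  obtain ⟨s₀, hs₀⟩ := Finset.card_pos.1 (Nat.zero_lt_of_lt hlt)
  obtain ⟨lam, hlam, hrel⟩ := exists_isTropRelation (one_ne_zero_of_ne_zero (hext s₀ hs₀).1)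
    (fun (s : S) j => (ξ j).toFun s) (by rwa [Fintype.card_coe])
  obtain ⟨i₀, hne⟩ := exists_sum_erase_ne_sum hs (e := Subtype.val) (fun s => hext s s.2)
    (fun s t h => Subtype.ext (hray s.2 t.2 h)) hlam
  refine hne (hsep _ _ fun j => ?_)
  simp only [TropHom.map_sum, TropHom.map_smul', smul_eq_mul]
  exact hrel.sum_erase_eq i₀ j

theorem SeparatesPoints.of_isResiduation {S : Finset X} (hS : TGenerates k (S : Set X))
    {D : S → TropHom k X k} (hD : ∀ s : S, IsResiduation (s : X) (D s).toFun) :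
    SeparatesPoints D := fun v w h => by
  rw [eq_sum_residuation hS hD v, eq_sum_residuation hS hD w]
  simp only [h]

theorem SeparatesPoints.comp {N : Type*} [TropSemigroup N] [TropModule k N] {C : Type*}
    {η : C → TropHom k N k} (hη : SeparatesPoints η) {α : TropHom k X N}
    (hα : Function.Injective α.toFun) : SeparatesPoints fun j => (η j).comp α :=
  fun _ _ h => hα (hη _ _ h)

/-- Otherwise the remaining functionals would still separate points. -/
theorem SeparatesPoints.exists_ne_zero (hs : Straight X) {S : Finset X}
    (hext : ∀ s ∈ S, TExtremal s) (hray : Set.InjOn (tray k) (S : Set X)) {C : Type*}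
    [Fintype C] {ξ : C → TropHom k X k} (hsep : SeparatesPoints ξ)
    (hcard : Fintype.card C ≤ S.card) (j₀ : C) : ∃ v, (ξ j₀).toFun v ≠ 0 := by
  classical
  by_contra! h
  have hsep' : SeparatesPoints fun j : {j // j ≠ j₀} => ξ j := fun v w hvw =>
    hsep v w fun j => if hj : j = j₀ then by rw [hj, h v, h w] else hvw ⟨j, hj⟩
  have := card_le_of_separatesPoints hs hext hray hsep'
  rw [Fintype.card_subtype_compl, Fintype.card_subtype_eq] at this
  have := Fintype.card_pos_iff.2 ⟨j₀⟩
  omega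

end Independence

theorem exists_tBasis_extremal {k X : Type*} [TropSemifield k] [TropSemigroup X]
    [TropModule k X] (hto : TotallyOrderedTSF k) (hfg : TFG k X)
    (hι : Function.Injective (iotaFun k X)) :
    ∃ S : Finset X, TGenerates k (S : Set X) ∧ (∀ s ∈ S, TExtremal s) ∧
      Set.InjOn (tray k) (S : Set X) ∧ tdim k X = S.card := by
  obtain ⟨S, hS⟩ := exists_tBasis hfg
  exact ⟨S, hS.1, fun _ => hS.extremal hto hι, hS.injOn_tray, hS.tdim_eq_card hto hι⟩

theorem LightlySurjective.of_isResiduation {k M N : Type*} [TropSemifield k] [TropSemigroup M]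
    [TropModule k M] [TropSemigroup N] [TropModule k N] {S : Finset N}
    (hS : TGenerates k (S : Set N)) {D : S → TropHom k N k}
    (hD : ∀ s : S, IsResiduation (s : N) (D s).toFun) {α : TropHom k M N}
    (hα : ∀ s, ∃ v, (D s).toFun (α.toFun v) ≠ 0) : LightlySurjective α := by
  choose v hv using hα
  intro w
  set c : S → k := fun s => (D s).toFun w * tinv ((D s).toFun (α.toFun (v s)))
  refine ⟨∑ s, c s • v s, tle_of_forall_residuation_tle hS hD fun s => ?_⟩
  have hcs : (D s).toFun w = c s * (D s).toFun (α.toFun (v s)) := by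
    rw [mul_assoc, mul_comm (tinv _), mul_tinv (hv s), mul_one]
  simp only [TropHom.map_sum, TropHom.map_smul', smul_eq_mul]
  exact hcs ▸ tle_sum (f := fun s' => c s' * (D s).toFun (α.toFun (v s'))) (Finset.mem_univ s)

theorem stmt2_general {k M N : Type*} [TropSemifield k] [TropSemigroup M] [TropModule k M]
    [TropSemigroup N] [TropModule k N]
    (hto : TotallyOrderedTSF k) (hqc : QuasiCompleteTSF k)
    (hMfg : TFG k M) (hNfg : TFG k N) (hMs : Straight M) (hNs : Straight N)
    (hMr : Function.Bijective (iotaFun k M)) (hNr : Function.Bijective (iotaFun k N))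
    (α : TropHom k M N) (hinj : Function.Injective α.toFun) :
    tdim k M ≤ tdim k N ∧ (tdim k M = tdim k N → LightlySurjective α) := by
  obtain ⟨SM, -, hSMext, hSMray, hdimM⟩ := exists_tBasis_extremal hto hMfg hMr.1
  obtain ⟨SN, hSN, hSNext, -, hdimN⟩ := exists_tBasis_extremal hto hNfg hNr.1
  choose D hD using fun s : SN => exists_isResiduation_hom hqc hNr.1 hNs (hSNext s s.2)
  have hsep : SeparatesPoints fun s => (D s).comp α :=
    (SeparatesPoints.of_isResiduation hSN hD).comp hinj
  have hcard := card_le_of_separatesPoints hMs hSMext hSMray hsep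
  rw [Fintype.card_coe] at hcard
  rw [hdimM, hdimN]
  refine ⟨hcard, fun heq => LightlySurjective.of_isResiduation hSN hD fun s => ?_⟩
  exact hsep.exists_ne_zero hMs hSMext hSMray (by rw [Fintype.card_coe, heq]) s

theorem stmt2 {k M N : Type*} [TropSemifield k] [TropSemigroup M] [TropModule k M]
    [TropSemigroup N] [TropModule k N]
    (hto : TotallyOrderedTSF k) (hqc : QuasiCompleteTSF k) (hrat : RationalTSF k)
    (hMfg : TFG k M) (hNfg : TFG k N) (hMs : Straight M) (hNs : Straight N)
    (hMr : Function.Bijective (iotaFun k M)) (hNr : Function.Bijective (iotaFun k N))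
    (α : TropHom k M N) (hinj : Function.Injective α.toFun) :
    tdim k M ≤ tdim k N ∧ (tdim k M = tdim k N → LightlySurjective α) :=
  stmt2_general hto hqc hMfg hNfg hMs hNs hMr hNr α hinj
end
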